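/- For every integer n ≥ 0 and every integer d ≥ 1, the multiple series ∑ (C(2n_1,n_1)/4^{n_1}) · ∏_{j=1}^d 1/(2n_j−1), summed over all integer tuples (n_1,…,n_d) with n_1 > n_2 > ⋯ > n_d > n, converges absolutely and equals C(2n,n)/4^n. -/

import Mathlib

/-!
With `a m = C(2m,m)/4^m` one has `a m / (2m - 1) = a (m-1) - a m`, and `a m → 0` since
`a m ^ 2 (2m + 1) ≤ 1`; so the sum over `m > n` of `a m / (2m - 1)` telescopes to `a n`, which is
the case `d = 1`. For larger `d`, fix the smallest entry `n_d = m > n`: by induction the sum over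
`n_1 > ⋯ > n_{d-1} > m` is `a m`, and what remains is the case `d = 1`. All terms are nonnegative,
so the iterated sum is the sum over tuples.
-/

open Filter Topology

lemma Antitone.hasSum_sub_succ {f : ℕ → ℝ} (hf : Antitone f) {l : ℝ}
    (hl : Tendsto f atTop (𝓝 l)) : HasSum (fun k => f k - f (k + 1)) (f 0 - l) :=
  (hasSum_iff_tendsto_nat_of_nonneg (fun k => sub_nonneg.2 (hf k.le_succ)) _).2 <| by
    simpa only [Finset.sum_range_sub'] using tendsto_const_nhds.sub hl

def Nat.addEquivSubtypeLt (n : ℕ) : ℕ ≃ {m : ℕ // n < m} where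
  toFun k := ⟨k + (n + 1), by omega⟩
  invFun m := m.1 - (n + 1)
  left_inv k := by simp
  right_inv m := Subtype.ext (by simp; omega)

lemma Fin.strictAnti_snoc_iff {α : Type*} [Preorder α] {d : ℕ} {t : Fin d → α} {x : α} :
    StrictAnti (Fin.snoc t x : Fin (d + 1) → α) ↔ StrictAnti t ∧ ∀ i, x < t i := by
  refine ⟨fun h => ⟨fun i j hij => ?_, fun i => ?_⟩, fun ⟨ht, hx⟩ i j hij => ?_⟩
  · simpa using h (Fin.castSucc_lt_castSucc_iff.2 hij)
  · simpa using h (Fin.castSucc_lt_last i)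
  · cases i using Fin.lastCases with
    | last => exact absurd hij (not_lt.2 (Fin.le_last j))
    | cast i =>
      cases j using Fin.lastCases with
      | last => simpa using hx i
      | cast j => simpa using ht (Fin.castSucc_lt_castSucc_iff.1 hij)

abbrev StrictAntiTupleAbove (d n : ℕ) : Type := {ns : Fin d → ℕ // StrictAnti ns ∧ ∀ i, n < ns i}

def StrictAntiTupleAbove.snocEquiv (d n : ℕ) :
    (Σ m : {m : ℕ // n < m}, StrictAntiTupleAbove d m) ≃ StrictAntiTupleAbove (d + 1) n where
  toFun p := ⟨Fin.snoc p.2.1 p.1.1, Fin.strictAnti_snoc_iff.2 ⟨p.2.2.1, p.2.2.2⟩,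
    Fin.lastCases (by simpa using p.1.2) fun i => by simpa using p.1.2.trans (p.2.2.2 i)⟩
  invFun ns := ⟨⟨ns.1 (Fin.last d), ns.2.2 _⟩, ⟨Fin.init ns.1, by
    have h := ns.2.1
    rwa [← Fin.snoc_init_self ns.1, Fin.strictAnti_snoc_iff] at h⟩⟩
  left_inv p := Sigma.subtype_ext (by simp) (by simp)
  right_inv ns := Subtype.ext (Fin.snoc_init_self ns.1)

def StrictAntiTupleAbove.oneEquiv (n : ℕ) : StrictAntiTupleAbove 1 n ≃ {m : ℕ // n < m} :=
  (Equiv.funUnique (Fin 1) ℕ).subtypeEquiv fun ns => by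
    simp [Subsingleton.strictAnti]

theorem hasSum_mul_prod_strictAntiTupleAbove {f g : ℕ → ℝ} (hf : ∀ m, 0 ≤ f m)
    (hg : ∀ m, 0 < m → 0 ≤ g m) (htail : ∀ n, HasSum (fun m : {m : ℕ // n < m} => f m * g m) (f n))
    (d n : ℕ) :
    HasSum (fun ns : StrictAntiTupleAbove (d + 1) n => f (ns.1 0) * ∏ i, g (ns.1 i)) (f n) := by
  induction d generalizing n with
  | zero =>
    rw [← (StrictAntiTupleAbove.oneEquiv n).symm.hasSum_iff]
    convert htail n using 1
    funext m
    simp [StrictAntiTupleAbove.oneEquiv]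
  | succ d ih =>
    rw [← (StrictAntiTupleAbove.snocEquiv (d + 1) n).hasSum_iff]
    have hfiber (m : {m : ℕ // n < m}) :
        HasSum (fun t : StrictAntiTupleAbove (d + 1) m => f (t.1 0) * (∏ i, g (t.1 i)) * g m)
          (f m * g m) :=
      (ih m).mul_right _
    have hnonneg (p : Σ m : {m : ℕ // n < m}, StrictAntiTupleAbove (d + 1) m) :
        0 ≤ f (p.2.1 0) * (∏ i, g (p.2.1 i)) * g p.1 :=
      mul_nonneg (mul_nonneg (hf _) (Finset.prod_nonneg fun i _ => hg _ (by
        have := p.2.2.2 i; omega))) (hg _ (by have := p.1.2; omega))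
    have hsummable := (summable_sigma_of_nonneg hnonneg).2
      ⟨fun m => (hfiber m).summable, (htail n).summable.congr fun m => (hfiber m).tsum_eq.symm⟩
    convert (htail n).sigma_of_hasSum hfiber hsummable using 1
    funext ⟨m, t⟩
    change f ((Fin.snoc t.1 m.1 : Fin (d + 2) → ℕ) 0) *
      ∏ i, g ((Fin.snoc t.1 m.1 : Fin (d + 2) → ℕ) i) = _
    rw [Fin.prod_univ_castSucc, ← Fin.castSucc_zero]
    simp only [Fin.snoc_castSucc, Fin.snoc_last, mul_assoc]

noncomputable def centralBinomRatio (n : ℕ) : ℝ := (n.centralBinom : ℝ) / 4 ^ n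

lemma centralBinomRatio_pos (n : ℕ) : 0 < centralBinomRatio n := by
  unfold centralBinomRatio
  have := n.centralBinom_pos
  positivity

lemma centralBinomRatio_succ_mul (n : ℕ) :
    centralBinomRatio (n + 1) * (2 * (n + 1)) = centralBinomRatio n * (2 * n + 1) := by
  have h : ((n + 1 : ℕ) : ℝ) * (n + 1).centralBinom = 2 * (2 * n + 1) * n.centralBinom := by
    exact_mod_cast n.succ_mul_centralBinom_succ
  unfold centralBinomRatio
  rw [pow_succ]
  field_simp
  push_cast at h
  linear_combination 2 * h

lemma centralBinomRatio_antitone : Antitone centralBinomRatio := by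
  refine antitone_nat_of_succ_le fun n => ?_
  have h := centralBinomRatio_succ_mul n
  nlinarith [centralBinomRatio_pos n, centralBinomRatio_pos (n + 1)]

lemma centralBinomRatio_sq_mul_le (n : ℕ) : centralBinomRatio n ^ 2 * (2 * n + 1) ≤ 1 := by
  induction n with
  | zero => simp [centralBinomRatio]
  | succ n ih =>
    set x := centralBinomRatio n
    set y := centralBinomRatio (n + 1)
    have h : y * (2 * (n + 1)) = x * (2 * n + 1) := centralBinomRatio_succ_mul n
    have key : y ^ 2 * (2 * n + 3) * (2 * n + 2) ^ 2 ≤ 1 * (2 * n + 2) ^ 2 := calc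
      _ = x ^ 2 * (2 * n + 1) * ((2 * n + 1) * (2 * n + 3)) := by
        linear_combination (2 * n + 3) * (y * (2 * (n + 1)) + x * (2 * n + 1)) * h
      _ ≤ 1 * ((2 * n + 1) * (2 * n + 3)) := by gcongr
      _ ≤ 1 * (2 * n + 2) ^ 2 := by nlinarith
    push_cast
    linarith [le_of_mul_le_mul_right key (by positivity)]

lemma tendsto_centralBinomRatio_atTop : Tendsto centralBinomRatio atTop (𝓝 0) := by
  have hsq : Tendsto (fun n => centralBinomRatio n ^ 2) atTop (𝓝 0) := by
    refine squeeze_zero (fun n => sq_nonneg _) (fun n => ?_) tendsto_one_div_add_atTop_nhds_zero_nat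
    rw [le_div_iff₀ (by positivity)]
    nlinarith [centralBinomRatio_sq_mul_le n, sq_nonneg (centralBinomRatio n),
      (n.cast_nonneg : (0 : ℝ) ≤ n)]
  simpa [Real.sqrt_sq (centralBinomRatio_pos _).le] using hsq.sqrt

lemma centralBinomRatio_sub_succ (n : ℕ) :
    centralBinomRatio n - centralBinomRatio (n + 1) =
      centralBinomRatio (n + 1) * (1 / (2 * ((n + 1 : ℕ) : ℝ) - 1)) := by
  have h := centralBinomRatio_succ_mul n
  have hn : (0 : ℝ) < 2 * ((n + 1 : ℕ) : ℝ) - 1 := by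
    push_cast
    linarith [(n.cast_nonneg : (0 : ℝ) ≤ n)]
  field_simp
  push_cast
  linear_combination -h

lemma hasSum_centralBinomRatio_tail (n : ℕ) :
    HasSum (fun m : {m : ℕ // n < m} => centralBinomRatio m * (1 / (2 * (m : ℝ) - 1)))
      (centralBinomRatio n) := by
  rw [← (Nat.addEquivSubtypeLt n).hasSum_iff]
  have h := Antitone.hasSum_sub_succ (f := fun k => centralBinomRatio (k + n))
    (centralBinomRatio_antitone.comp_monotone fun _ _ h => by omega)
    (tendsto_centralBinomRatio_atTop.comp (tendsto_add_atTop_nat n))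
  simp only [zero_add, sub_zero, add_right_comm _ 1 n, centralBinomRatio_sub_succ] at h
  simpa only [Nat.addEquivSubtypeLt, Equiv.coe_fn_mk, Function.comp_def, ← add_assoc] using h

/-- For every integer `n ≥ 0` and `d ≥ 1`, the multiple series
`∑ (C(2n₁,n₁)/4^{n₁}) · ∏_{j=1}^d 1/(2n_j−1)` over strictly decreasing tuples
`n₁ > n₂ > ⋯ > n_d > n` converges absolutely and equals `C(2n,n)/4^n`. -/
theorem apery_tail_gamma_ones (n : ℕ) (d : ℕ) (hd : 0 < d) :
    HasSum
      (fun ns : {ns : Fin d → ℕ // StrictAnti ns ∧ ∀ i, n < ns i} =>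
        (Nat.choose (2 * ns.1 ⟨0, hd⟩) (ns.1 ⟨0, hd⟩) : ℝ) / 4 ^ (ns.1 ⟨0, hd⟩) *
          ∏ i : Fin d, (1 / (2 * (ns.1 i : ℝ) - 1)))
      ((Nat.choose (2 * n) n : ℝ) / 4 ^ n) := by
  obtain ⟨d, rfl⟩ : ∃ k, d = k + 1 := ⟨d - 1, by omega⟩
  have h := hasSum_mul_prod_strictAntiTupleAbove (f := centralBinomRatio)
    (g := fun m => 1 / (2 * (m : ℝ) - 1)) (fun m => (centralBinomRatio_pos m).le)
    (fun m hm => one_div_nonneg.2 (by linarith [(Nat.one_le_cast.2 hm : (1 : ℝ) ≤ m)]))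
    hasSum_centralBinomRatio_tail d n
  simpa only [centralBinomRatio, Nat.centralBinom_eq_two_mul_choose, Fin.zero_eta] using h
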